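/- Let r1, r2, r3 ≥ 0 and l12, l23, l31 > 0 satisfy the strict triangle inequalities (l12 < l23 + l31, l23 < l31 + l12, l31 < l12 + l23) and the disjointness conditions l12 > r1 + r2, l23 > r2 + r3, l31 > r3 + r1. Then there exist points p1, p2, p3 in the Euclidean plane with dist(p1, p2) = l12, dist(p2, p3) = l23, dist(p3, p1) = l31; any such points are affinely independent, the closed disks centered at p1, p2, p3 with radii r1, r2, r3 are pairwise disjoint, and there exists a unique pair (q, ρ) with ρ > 0 and dist(q, pi)^2 = ρ^2 + ri^2 for i = 1, 2, 3, i.e. a unique circle orthogonal to the three vertex circles. In other words, every point of the polytope of edge lengths and vertex radii satisfying these inequalities is realized by a decorated Euclidean triangle. -/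

import Mathlib

/-!
The vertices are placed in coordinates, the abscissa of the third one coming from the law of
cosines; the strict triangle inequalities rule out collinearity, since of three collinear points
one lies between the other two.

A circle `(q, ρ)` is orthogonal to the vertex circle `(pᵢ, rᵢ)` iff the power
`dist q pᵢ ^ 2 - rᵢ ^ 2` of `q` equals `ρ ^ 2`. Differences of powers are affine in `q`, so for
affinely independent centers there is exactly one point of equal power, the radical center. Its
power is positive because it cannot lie in two disjoint closed disks, and `ρ` is its square root.
-/

open scoped RealInnerProductSpace

theorem not_collinear_of_dist_lt_dist_add_dist {V P : Type*} [NormedAddCommGroup V]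
    [NormedSpace ℝ V] [MetricSpace P] [NormedAddTorsor V P] {p₁ p₂ p₃ : P}
    (h₁ : dist p₁ p₂ < dist p₂ p₃ + dist p₃ p₁) (h₂ : dist p₂ p₃ < dist p₃ p₁ + dist p₁ p₂)
    (h₃ : dist p₃ p₁ < dist p₁ p₂ + dist p₂ p₃) : ¬Collinear ℝ {p₁, p₂, p₃} := by
  intro hcol
  rcases hcol.wbtw_or_wbtw_or_wbtw with h | h | h <;> have := h.dist_add_dist
  all_goals simp only [dist_comm] at *; linarith

theorem EuclideanSpace.dist_fin_two (x y : EuclideanSpace ℝ (Fin 2)) :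
    dist x y = √((x 0 - y 0) ^ 2 + (x 1 - y 1) ^ 2) := by
  simp [EuclideanSpace.dist_eq, Fin.sum_univ_two, Real.dist_eq]

theorem exists_euclideanSpace_fin_two_dist_eq {a b c : ℝ} (ha : a ≤ b + c) (hb : b ≤ c + a)
    (hc : c ≤ a + b) :
    ∃ p₁ p₂ p₃ : EuclideanSpace ℝ (Fin 2), dist p₁ p₂ = a ∧ dist p₂ p₃ = b ∧ dist p₃ p₁ = c := by
  set x := (a ^ 2 + c ^ 2 - b ^ 2) / (2 * a)
  have hx : 2 * a * x = a ^ 2 + c ^ 2 - b ^ 2 := by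
    rcases eq_or_ne a 0 with rfl | ha₀
    · nlinarith
    · simp only [x]
      field_simp
  have hxc : x ^ 2 ≤ c ^ 2 := by
    rcases (show 0 ≤ a by linarith).eq_or_lt with rfl | ha₀
    · simpa [x] using sq_nonneg c
    · -- Heron: `(2ac)² - (2ax)² = (a + b + c)(b + c - a)(c + a - b)(a + b - c)`
      have heron : (2 * a * x) ^ 2 ≤ (2 * a * c) ^ 2 := by
        rw [hx]
        nlinarith [mul_nonneg (mul_nonneg (mul_nonneg (sub_nonneg.2 ha) (sub_nonneg.2 hb))
          (sub_nonneg.2 hc)) (show 0 ≤ a + b + c by linarith)]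
      rw [mul_pow, mul_pow (2 * a)] at heron
      exact le_of_mul_le_mul_left heron (by positivity)
  set y := √(c ^ 2 - x ^ 2)
  have hy : y ^ 2 = c ^ 2 - x ^ 2 := Real.sq_sqrt (by linarith)
  refine ⟨!₂[0, 0], !₂[a, 0], !₂[x, y], ?_, ?_, ?_⟩ <;>
    simp only [EuclideanSpace.dist_fin_two, Matrix.cons_val_zero, Matrix.cons_val_one]
  · rw [show (0 - a) ^ 2 + (0 - 0) ^ 2 = a ^ 2 by ring, Real.sqrt_sq (by linarith)]
  · rw [show (a - x) ^ 2 + (0 - y) ^ 2 = b ^ 2 by nlinarith, Real.sqrt_sq (by linarith)]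
  · rw [show (x - 0) ^ 2 + (y - 0) ^ 2 = c ^ 2 by nlinarith, Real.sqrt_sq (by linarith)]

theorem pos_of_dist_sq_sub_sq_eq_of_disjoint {X : Type*} [PseudoMetricSpace X] {q p₁ p₂ : X}
    {r₁ r₂ t : ℝ} (hr₁ : 0 ≤ r₁) (hr₂ : 0 ≤ r₂)
    (hdisj : Disjoint (Metric.closedBall p₁ r₁) (Metric.closedBall p₂ r₂))
    (ht₁ : dist q p₁ ^ 2 - r₁ ^ 2 = t) (ht₂ : dist q p₂ ^ 2 - r₂ ^ 2 = t) : 0 < t := by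
  by_contra! ht
  have hq₁ : dist q p₁ ≤ r₁ := (pow_le_pow_iff_left₀ dist_nonneg hr₁ two_ne_zero).1 (by linarith)
  have hq₂ : dist q p₂ ≤ r₂ := (pow_le_pow_iff_left₀ dist_nonneg hr₂ two_ne_zero).1 (by linarith)
  exact Set.disjoint_left.1 hdisj hq₁ hq₂

section InnerProductSpace

variable {ι V P : Type*} [NormedAddCommGroup V] [InnerProductSpace ℝ V]

theorem Module.Basis.existsUnique_inner_eq [FiniteDimensional ℝ V] (b : Module.Basis ι ℝ V)
    (c : ι → ℝ) : ∃! v : V, ∀ i, ⟪b i, v⟫ = c i := by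
  refine ⟨(InnerProductSpace.toDual ℝ V).symm (LinearMap.toContinuousLinearMap (b.constr ℝ c)),
    fun i => ?_, fun w hw => InnerProductSpace.ext_inner_left_basis b fun i => ?_⟩
  · rw [real_inner_comm, InnerProductSpace.toDual_symm_apply]
    simp
  · rw [hw i, real_inner_comm, InnerProductSpace.toDual_symm_apply]
    simp

variable [MetricSpace P] [NormedAddTorsor V P]

theorem dist_sq_sub_dist_sq_eq (q p₀ p : P) :
    dist q p ^ 2 - dist q p₀ ^ 2 = dist p p₀ ^ 2 - 2 * ⟪p -ᵥ p₀, q -ᵥ p₀⟫ := by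
  rw [dist_eq_norm_vsub V q p, ← vsub_sub_vsub_cancel_right q p p₀, norm_sub_sq_real,
    dist_eq_norm_vsub V q p₀, dist_eq_norm_vsub V p p₀, real_inner_comm]
  ring

theorem AffineBasis.exists_dist_sq_sub_eq_iff (b : AffineBasis ι ℝ P) (w : ι → ℝ) (q : P)
    (i₀ : ι) :
    (∃ t : ℝ, ∀ i, dist q (b i) ^ 2 - w i = t) ↔
      ∀ j, ⟪b.basisOf i₀ j, q -ᵥ b i₀⟫ = (dist (b j) (b i₀) ^ 2 - w j + w i₀) / 2 := by
  simp only [b.basisOf_apply]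
  constructor
  · rintro ⟨t, ht⟩ j
    linarith [ht j, ht i₀, dist_sq_sub_dist_sq_eq q (b i₀) (b j)]
  · refine fun h => ⟨dist q (b i₀) ^ 2 - w i₀, fun i => ?_⟩
    rcases eq_or_ne i i₀ with rfl | hi
    · rfl
    · linarith [h ⟨i, hi⟩, dist_sq_sub_dist_sq_eq q (b i₀) (b i)]

theorem AffineBasis.existsUnique_dist_sq_sub_eq [FiniteDimensional ℝ V] (b : AffineBasis ι ℝ P)
    (w : ι → ℝ) : ∃! q : P, ∃ t : ℝ, ∀ i, dist q (b i) ^ 2 - w i = t := by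
  obtain ⟨i₀⟩ := b.nonempty
  obtain ⟨v, hv, hv_unique⟩ := (b.basisOf i₀).existsUnique_inner_eq
    fun j => (dist (b j) (b i₀) ^ 2 - w j + w i₀) / 2
  refine ⟨v +ᵥ b i₀, (b.exists_dist_sq_sub_eq_iff w _ i₀).2 ?_, fun q hq => ?_⟩
  · simpa only [vadd_vsub] using hv
  · exact (eq_vadd_iff_vsub_eq q v (b i₀)).2
      (hv_unique _ ((b.exists_dist_sq_sub_eq_iff w q i₀).1 hq))

theorem AffineBasis.existsUnique_dist_sq_eq_sq_add_sq [FiniteDimensional ℝ V]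
    (b : AffineBasis ι ℝ P) (r : ι → ℝ) {i j : ι} (hi : 0 ≤ r i) (hj : 0 ≤ r j)
    (hij : Disjoint (Metric.closedBall (b i) (r i)) (Metric.closedBall (b j) (r j))) :
    ∃! qρ : P × ℝ, 0 < qρ.2 ∧ ∀ k, dist qρ.1 (b k) ^ 2 = qρ.2 ^ 2 + r k ^ 2 := by
  obtain ⟨q, ⟨t, ht⟩, hq_unique⟩ := b.existsUnique_dist_sq_sub_eq fun k => r k ^ 2
  have ht_pos : 0 < t := pos_of_dist_sq_sub_sq_eq_of_disjoint hi hj hij (ht i) (ht j)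
  refine ⟨(q, √t), ⟨Real.sqrt_pos.2 ht_pos, fun k => ?_⟩, ?_⟩
  · rw [Real.sq_sqrt ht_pos.le, ← ht k]
    ring
  · rintro ⟨q', ρ'⟩ ⟨hρ', h'⟩
    obtain rfl : q' = q := hq_unique q' ⟨ρ' ^ 2, fun k => by rw [h' k]; ring⟩
    have hρ't : ρ' ^ 2 = t := by linarith [ht i, h' i]
    rw [← hρ't, Real.sqrt_sq hρ'.le]

end InnerProductSpace

theorem decorated_euclidean_triangle_realization_general
    (r₁ r₂ r₃ l₁₂ l₂₃ l₃₁ : ℝ)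
    (hr₁ : 0 ≤ r₁) (hr₂ : 0 ≤ r₂)
    (htri₁ : l₁₂ < l₂₃ + l₃₁) (htri₂ : l₂₃ < l₃₁ + l₁₂) (htri₃ : l₃₁ < l₁₂ + l₂₃)
    (hd₁₂ : l₁₂ > r₁ + r₂) (hd₂₃ : l₂₃ > r₂ + r₃) (hd₃₁ : l₃₁ > r₃ + r₁) :
    (∃ p₁ p₂ p₃ : EuclideanSpace ℝ (Fin 2),
      dist p₁ p₂ = l₁₂ ∧ dist p₂ p₃ = l₂₃ ∧ dist p₃ p₁ = l₃₁) ∧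
    ∀ p₁ p₂ p₃ : EuclideanSpace ℝ (Fin 2),
      dist p₁ p₂ = l₁₂ → dist p₂ p₃ = l₂₃ → dist p₃ p₁ = l₃₁ →
      AffineIndependent ℝ ![p₁, p₂, p₃] ∧
      Disjoint (Metric.closedBall p₁ r₁) (Metric.closedBall p₂ r₂) ∧
      Disjoint (Metric.closedBall p₂ r₂) (Metric.closedBall p₃ r₃) ∧
      Disjoint (Metric.closedBall p₃ r₃) (Metric.closedBall p₁ r₁) ∧
      ∃! qρ : EuclideanSpace ℝ (Fin 2) × ℝ,
        0 < qρ.2 ∧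
        dist qρ.1 p₁ ^ 2 = qρ.2 ^ 2 + r₁ ^ 2 ∧
        dist qρ.1 p₂ ^ 2 = qρ.2 ^ 2 + r₂ ^ 2 ∧
        dist qρ.1 p₃ ^ 2 = qρ.2 ^ 2 + r₃ ^ 2 := by
  refine ⟨exists_euclideanSpace_fin_two_dist_eq htri₁.le htri₂.le htri₃.le,
    fun p₁ p₂ p₃ h₁₂ h₂₃ h₃₁ => ?_⟩
  subst h₁₂ h₂₃ h₃₁
  have hind : AffineIndependent ℝ ![p₁, p₂, p₃] := affineIndependent_iff_not_collinear_set.2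
    (not_collinear_of_dist_lt_dist_add_dist htri₁ htri₂ htri₃)
  have hdisj₁₂ := Metric.closedBall_disjoint_closedBall hd₁₂
  refine ⟨hind, hdisj₁₂, Metric.closedBall_disjoint_closedBall hd₂₃,
    Metric.closedBall_disjoint_closedBall hd₃₁, ?_⟩
  let b : AffineBasis (Fin 3) ℝ (EuclideanSpace ℝ (Fin 2)) :=
    ⟨_, hind, hind.affineSpan_eq_top_iff_card_eq_finrank_add_one.2 (by simp)⟩
  have h := b.existsUnique_dist_sq_eq_sq_add_sq ![r₁, r₂, r₃] (i := 0) (j := 1) hr₁ hr₂ hdisj₁₂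
  simp only [Fin.forall_fin_succ, IsEmpty.forall_iff, and_true] at h
  exact h

/-- Any admissible vector of edge lengths and vertex radii (strict triangle
inequalities plus disjointness `l > r + r'`) is realized by a decorated Euclidean
triangle: vertices with the prescribed distances exist; any such vertices are affinely
independent; the closed vertex disks are pairwise disjoint; and there is a unique circle
orthogonal to the three vertex circles. -/
theorem decorated_euclidean_triangle_realization
    (r₁ r₂ r₃ l₁₂ l₂₃ l₃₁ : ℝ)
    (hr₁ : 0 ≤ r₁) (hr₂ : 0 ≤ r₂) (hr₃ : 0 ≤ r₃)
    (hl₁₂ : 0 < l₁₂) (hl₂₃ : 0 < l₂₃) (hl₃₁ : 0 < l₃₁)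
    (htri₁ : l₁₂ < l₂₃ + l₃₁) (htri₂ : l₂₃ < l₃₁ + l₁₂) (htri₃ : l₃₁ < l₁₂ + l₂₃)
    (hd₁₂ : l₁₂ > r₁ + r₂) (hd₂₃ : l₂₃ > r₂ + r₃) (hd₃₁ : l₃₁ > r₃ + r₁) :
    (∃ p₁ p₂ p₃ : EuclideanSpace ℝ (Fin 2),
      dist p₁ p₂ = l₁₂ ∧ dist p₂ p₃ = l₂₃ ∧ dist p₃ p₁ = l₃₁) ∧
    ∀ p₁ p₂ p₃ : EuclideanSpace ℝ (Fin 2),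
      dist p₁ p₂ = l₁₂ → dist p₂ p₃ = l₂₃ → dist p₃ p₁ = l₃₁ →
      AffineIndependent ℝ ![p₁, p₂, p₃] ∧
      Disjoint (Metric.closedBall p₁ r₁) (Metric.closedBall p₂ r₂) ∧
      Disjoint (Metric.closedBall p₂ r₂) (Metric.closedBall p₃ r₃) ∧
      Disjoint (Metric.closedBall p₃ r₃) (Metric.closedBall p₁ r₁) ∧
      ∃! qρ : EuclideanSpace ℝ (Fin 2) × ℝ,
        0 < qρ.2 ∧
        dist qρ.1 p₁ ^ 2 = qρ.2 ^ 2 + r₁ ^ 2 ∧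
        dist qρ.1 p₂ ^ 2 = qρ.2 ^ 2 + r₂ ^ 2 ∧
        dist qρ.1 p₃ ^ 2 = qρ.2 ^ 2 + r₃ ^ 2 :=
  decorated_euclidean_triangle_realization_general r₁ r₂ r₃ l₁₂ l₂₃ l₃₁ hr₁ hr₂ htri₁ htri₂ htri₃
    hd₁₂ hd₂₃ hd₃₁
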